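/- For all x > 0, exp(−(1/2)ψ(x+1/3)) < Γ(x)/(x^x e^{−x}√(2π)). -/

import Mathlib

open Real

noncomputable def psi (x : ℝ) : ℝ := deriv Real.Gamma x / Real.Gamma x

namespace StmtAux

open Set Filter

lemma ne_neg_nat {y : ℝ} (hy : 0 < y) : ∀ m : ℕ, y ≠ -m := by
  intro m h
  have : (0:ℝ) ≤ m := Nat.cast_nonneg m
  nlinarith

lemma hasDerivAt_logGamma {y : ℝ} (hy : 0 < y) :
    HasDerivAt (Real.log ∘ Real.Gamma) (psi y) y := by
  have h1 : HasDerivAt Real.Gamma (deriv Real.Gamma y) y :=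
    (Real.differentiableAt_Gamma (ne_neg_nat hy)).hasDerivAt
  exact h1.log (Real.Gamma_pos_of_pos hy).ne'

lemma deriv_logGamma {y : ℝ} (hy : 0 < y) :
    deriv (Real.log ∘ Real.Gamma) y = psi y := (hasDerivAt_logGamma hy).deriv

lemma slope_logGamma {y : ℝ} (hy : 0 < y) :
    slope (Real.log ∘ Real.Gamma) y (y+1) = Real.log y := by
  rw [slope_def_field]
  simp only [Function.comp_apply]
  rw [Real.Gamma_add_one hy.ne', Real.log_mul hy.ne' (Real.Gamma_pos_of_pos hy).ne']
  field_simp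
  ring

lemma psi_le_log {y : ℝ} (hy : 0 < y) : psi y ≤ Real.log y := by
  have := Real.convexOn_log_Gamma.deriv_le_slope (mem_Ioi.2 hy)
    (mem_Ioi.2 (show (0:ℝ) < y + 1 by linarith)) (by linarith)
    ((Real.differentiableAt_Gamma (ne_neg_nat hy)).log (Real.Gamma_pos_of_pos hy).ne')
  rwa [slope_logGamma hy, deriv_logGamma hy] at this

lemma log_le_psi_succ {y : ℝ} (hy : 0 < y) : Real.log y ≤ psi (y+1) := by
  have h1 : (0:ℝ) < y + 1 := by linarith
  have := Real.convexOn_log_Gamma.slope_le_deriv (mem_Ioi.2 hy) (mem_Ioi.2 h1)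
    (by linarith) ((Real.differentiableAt_Gamma (ne_neg_nat h1)).log (Real.Gamma_pos_of_pos h1).ne')
  rwa [slope_logGamma hy, deriv_logGamma h1] at this

lemma psi_succ {y : ℝ} (hy : 0 < y) : psi (y+1) = psi y + 1/y := by
  have hG := Real.Gamma_pos_of_pos hy
  have h1 : HasDerivAt Real.Gamma (deriv Real.Gamma y) y :=
    (Real.differentiableAt_Gamma (ne_neg_nat hy)).hasDerivAt
  have h2 : HasDerivAt Real.Gamma (deriv Real.Gamma (y+1)) (y+1) :=
    (Real.differentiableAt_Gamma (ne_neg_nat (by linarith))).hasDerivAt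
  have h3 : HasDerivAt (fun z => Real.Gamma (z+1)) (deriv Real.Gamma (y+1)) y := by
    simpa [Function.comp_def] using h2.comp y ((hasDerivAt_id y).add_const 1)
  have h4 : HasDerivAt (fun z => z * Real.Gamma z) (1 * Real.Gamma y + y * deriv Real.Gamma y) y :=
    (hasDerivAt_id y).mul h1
  have heq : (fun z => Real.Gamma (z+1)) =ᶠ[nhds y] (fun z => z * Real.Gamma z) := by
    filter_upwards [eventually_gt_nhds hy] with z hz
    exact Real.Gamma_add_one hz.ne'
  have h5 : HasDerivAt (fun z => Real.Gamma (z+1)) (1 * Real.Gamma y + y * deriv Real.Gamma y) y :=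
    h4.congr_of_eventuallyEq heq
  have hd : deriv Real.Gamma (y+1) = Real.Gamma y + y * deriv Real.Gamma y := by
    have := h3.unique h5; linarith
  unfold psi
  rw [hd, Real.Gamma_add_one hy.ne']
  field_simp
  ring

/-! ### The elementary logarithmic inequality -/

lemma key_hasDeriv {u : ℝ} (hu : 0 ≤ u) :
    HasDerivAt (fun v : ℝ => Real.log (1+v) - v*(6+5*v)/((6+2*v)*(1+v)))
      (1/(1+u) - ((6+10*u)*((6+2*u)*(1+u)) - (u*(6+5*u))*(2*(1+u)+(6+2*u)*1))/((6+2*u)*(1+u))^2)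
      u := by
  have hden : (6+2*u)*(1+u) ≠ 0 := by positivity
  have e1 : HasDerivAt (fun v : ℝ => Real.log (1+v)) (1/(1+u)) u := by
    have h0 : HasDerivAt (fun v : ℝ => 1+v) 1 u := by simpa using (hasDerivAt_id u).const_add 1
    simpa using h0.log (by positivity : (1:ℝ)+u ≠ 0)
  have e2 : HasDerivAt (fun v : ℝ => v*(6+5*v)) (6+10*u) u := by
    have := (hasDerivAt_id u).mul (((hasDerivAt_id u).const_mul 5).const_add 6)
    exact this.congr_deriv (by simp only [id]; ring)
  have e3 : HasDerivAt (fun v : ℝ => (6+2*v)*(1+v)) (2*(1+u)+(6+2*u)*1) u := by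
    have := (((hasDerivAt_id u).const_mul 2).const_add 6).mul ((hasDerivAt_id u).const_add 1)
    exact this.congr_deriv (by simp only [id]; ring)
  exact e1.sub (e2.div e3 hden)

lemma key_log {t : ℝ} (ht : 0 < t) :
    t*(6+5*t)/((6+2*t)*(1+t)) < Real.log (1+t) := by
  set h : ℝ → ℝ := fun v => Real.log (1+v) - v*(6+5*v)/((6+2*v)*(1+v)) with hh
  have hcont : ContinuousOn h (Ici 0) := by
    apply ContinuousOn.sub
    · exact ((continuous_const.add continuous_id).continuousOn).log
        (fun u hu => by have : (0:ℝ) ≤ u := hu; simp only [Pi.add_apply, id]; positivity)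
    · exact ContinuousOn.div (by fun_prop) (by fun_prop)
        (fun u hu => by have : (0:ℝ) ≤ u := hu; positivity)
  have hmono : StrictMonoOn h (Ici 0) := by
    apply strictMonoOn_of_deriv_pos (convex_Ici 0) hcont
    intro u hu
    rw [interior_Ici] at hu
    have hu' : 0 < u := hu
    rw [(key_hasDeriv hu'.le).deriv]
    rw [sub_pos, div_lt_div_iff₀ (by positivity) (by positivity)]
    nlinarith [sq_nonneg u, pow_pos hu' 3]
  have h0 : h 0 = 0 := by simp [hh]
  have := hmono (self_mem_Ici) (le_of_lt ht : (0:ℝ) ≤ t) ht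
  rw [h0] at this
  simp only [hh] at this
  linarith

lemma g_pos {x : ℝ} (hx : 0 < x) :
    1 + 1/(2*(x+1/3)) < (x+1)*(Real.log (x+1) - Real.log x) := by
  have ht : 0 < 1/x := by positivity
  have h1 : Real.log (1+1/x) = Real.log (x+1) - Real.log x := by
    rw [show (1:ℝ)+1/x = (x+1)/x by field_simp]
    exact Real.log_div (by positivity) hx.ne'
  have hk := key_log ht
  rw [h1] at hk
  have h2 := mul_lt_mul_of_pos_left hk (show (0:ℝ) < x+1 by linarith)
  have h3 : (x+1) * ((1/x)*(6+5*(1/x))/((6+2*(1/x))*(1+1/x))) = 1 + 1/(2*(x+1/3)) := by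
    field_simp
    ring
  rwa [h3] at h2

/-! ### Stirling asymptotics -/

lemma stirling_fact :
    Filter.Tendsto (fun k : ℕ => Real.log (Nat.factorial k) - ((k:ℝ)+1/2)*Real.log k + k
      - (1/2)*Real.log (2*Real.pi)) atTop (nhds 0) := by
  have h1 : Tendsto (fun k:ℕ => Real.log (Stirling.stirlingSeq k)) atTop
      (nhds (Real.log (Real.sqrt Real.pi))) :=
    ((Real.continuousAt_log (by positivity)).tendsto).comp Stirling.tendsto_stirlingSeq_sqrt_pi
  have h2 : Real.log (Real.sqrt Real.pi) = (1/2)*Real.log Real.pi := by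
    rw [Real.log_sqrt Real.pi_pos.le]; ring
  have h3 : Tendsto (fun k:ℕ => Real.log (Stirling.stirlingSeq k) - (1/2)*Real.log Real.pi)
      atTop (nhds 0) := by
    have := h1.sub_const ((1/2)*Real.log Real.pi)
    rw [h2] at this; simpa using this
  apply h3.congr'
  filter_upwards [eventually_ge_atTop 1] with k hk
  have hk0 : (0:ℝ) < k := by exact_mod_cast hk
  rw [Stirling.log_stirlingSeq_formula, Real.log_mul two_ne_zero hk0.ne',
    Real.log_div hk0.ne' (Real.exp_ne_zero 1), Real.log_exp,
    Real.log_mul two_ne_zero Real.pi_pos.ne']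
  ring

noncomputable def Af (y : ℝ) : ℝ :=
  Real.log (Real.Gamma y) - y*Real.log y + (1/2)*Real.log y + y - (1/2)*Real.log (2*Real.pi)

lemma logGamma_upper {k : ℕ} (_hk : 1 ≤ k) {s : ℝ} (hs0 : 0 ≤ s) (hs1 : s < 1) :
    Real.log (Real.Gamma ((k:ℝ)+1+s)) ≤ Real.log (Nat.factorial k) + s * Real.log ((k:ℝ)+1) := by
  have m1 : ((k:ℝ)+1) ∈ Ioi (0:ℝ) := by
    simp only [mem_Ioi]; positivity
  have m2 : ((k:ℝ)+2) ∈ Ioi (0:ℝ) := by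
    simp only [mem_Ioi]; positivity
  have hc := Real.convexOn_log_Gamma.2 m1 m2 (by linarith : (0:ℝ) ≤ 1 - s) hs0 (by ring)
  simp only [smul_eq_mul, Function.comp_apply] at hc
  have e0 : (1-s)*((k:ℝ)+1) + s*((k:ℝ)+2) = (k:ℝ)+1+s := by ring
  rw [e0] at hc
  have e1 : Real.Gamma ((k:ℝ)+1) = Nat.factorial k := Real.Gamma_nat_eq_factorial k
  have e2 : Real.Gamma ((k:ℝ)+2) = Nat.factorial (k+1) := by
    have := Real.Gamma_nat_eq_factorial (k+1)
    push_cast at this ⊢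
    convert this using 2
    ring
  rw [e1, e2] at hc
  have e3 : Real.log (Nat.factorial (k+1)) = Real.log ((k:ℝ)+1) + Real.log (Nat.factorial k) := by
    rw [Nat.factorial_succ]
    push_cast
    rw [Real.log_mul (by positivity) (by positivity)]
  rw [e3] at hc
  calc Real.log (Real.Gamma ((k:ℝ)+1+s)) ≤ (1-s)*Real.log (Nat.factorial k)
        + s*(Real.log ((k:ℝ)+1) + Real.log (Nat.factorial k)) := hc
    _ = Real.log (Nat.factorial k) + s * Real.log ((k:ℝ)+1) := by ring

lemma logGamma_lower {k : ℕ} (hk : 1 ≤ k) {s : ℝ} (hs0 : 0 ≤ s) :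
    Real.log (Nat.factorial k) + s * Real.log k ≤ Real.log (Real.Gamma ((k:ℝ)+1+s)) := by
  have hk0 : (0:ℝ) < k := by exact_mod_cast hk
  have e1 : Real.Gamma ((k:ℝ)+1) = Nat.factorial k := Real.Gamma_nat_eq_factorial k
  rcases eq_or_lt_of_le hs0 with rfl | hs
  · simp [e1]
  · have hc := Real.convexOn_log_Gamma.slope_mono_adjacent
      (mem_Ioi.2 hk0) (mem_Ioi.2 (by linarith : (0:ℝ) < (k:ℝ)+1+s))
      (by linarith : (k:ℝ) < (k:ℝ)+1) (by linarith : (k:ℝ)+1 < (k:ℝ)+1+s)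
    simp only [Function.comp_apply] at hc
    have e2 : Real.Gamma ((k:ℝ)+1) = k * Real.Gamma k := Real.Gamma_add_one hk0.ne'
    have e3 : Real.log (Real.Gamma ((k:ℝ)+1)) - Real.log (Real.Gamma (k:ℝ)) = Real.log k := by
      rw [e2, Real.log_mul hk0.ne' (Real.Gamma_pos_of_pos hk0).ne']; ring
    rw [show ((k:ℝ)+1-(k:ℝ)) = 1 by ring, show ((k:ℝ)+1+s-((k:ℝ)+1)) = s by ring,
      div_one, e3] at hc
    rw [le_div_iff₀ hs] at hc
    rw [e1] at hc
    linarith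

lemma A_tendsto {s : ℝ} (hs0 : 0 ≤ s) (hs1 : s < 1) :
    Tendsto (fun k : ℕ => Af ((k:ℝ)+1+s)) atTop (nhds 0) := by
  set T : ℕ → ℝ := fun k => Real.log (Nat.factorial k) - ((k:ℝ)+1/2)*Real.log k + k
      - (1/2)*Real.log (2*Real.pi) with hT
  set l : ℕ → ℝ := fun k => (1+s) - ((k:ℝ)+s+1/2)*Real.log (1+(1+s)/k) with hldef
  set u : ℕ → ℝ := fun k => l k + s*Real.log (1+1/(k:ℝ)) with hudef
  have hlog0 : Tendsto (fun k:ℕ => Real.log (1+(1+s)/(k:ℝ))) atTop (nhds 0) := by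
    have h : Tendsto (fun k:ℕ => 1+(1+s)/(k:ℝ)) atTop (nhds 1) := by
      simpa using tendsto_const_nhds.add (tendsto_const_div_atTop_nhds_zero_nat (1+s))
    have := ((Real.continuousAt_log one_ne_zero).tendsto).comp h
    simpa [Function.comp_def] using this
  have hlog1 : Tendsto (fun k:ℕ => Real.log (1+1/(k:ℝ))) atTop (nhds 0) := by
    have h : Tendsto (fun k:ℕ => 1+1/(k:ℝ)) atTop (nhds 1) := by
      simpa using tendsto_const_nhds.add (tendsto_const_div_atTop_nhds_zero_nat (1:ℝ))
    have := ((Real.continuousAt_log one_ne_zero).tendsto).comp h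
    simpa [Function.comp_def] using this
  have hk1 : Tendsto (fun k:ℕ => (k:ℝ) * Real.log (1+(1+s)/(k:ℝ))) atTop (nhds (1+s)) :=
    (Real.tendsto_mul_log_one_add_div_atTop (1+s)).comp tendsto_natCast_atTop_atTop
  have hl : Tendsto l atTop (nhds 0) := by
    have h2 : Tendsto (fun k:ℕ => (k:ℝ)*Real.log (1+(1+s)/(k:ℝ))
        + (s+1/2)*Real.log (1+(1+s)/(k:ℝ))) atTop (nhds ((1+s) + (s+1/2)*0)) :=
      hk1.add (hlog0.const_mul (s+1/2))
    have h3 := h2.const_sub (1+s)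
    have h4 : (1+s) - ((1+s) + (s+1/2)*0) = 0 := by ring
    rw [h4] at h3
    apply h3.congr
    intro k
    simp only [hldef]
    ring
  have hu : Tendsto u atTop (nhds 0) := by
    have := hl.add (hlog1.const_mul s)
    have h0 : (0:ℝ) + s*0 = 0 := by ring
    rw [h0] at this
    apply this.congr
    intro k
    simp only [hudef]
  have hsq : Tendsto (fun k:ℕ => Af ((k:ℝ)+1+s) - T k) atTop (nhds 0) := by
    apply tendsto_of_tendsto_of_tendsto_of_le_of_le' hl hu
    · filter_upwards [eventually_ge_atTop 1] with k hk
      have hk0 : (0:ℝ) < k := by exact_mod_cast hk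
      have hlo := logGamma_lower hk hs0
      have elog : Real.log (1+(1+s)/(k:ℝ)) = Real.log ((k:ℝ)+1+s) - Real.log k := by
        rw [show (1:ℝ)+(1+s)/(k:ℝ) = ((k:ℝ)+1+s)/k by field_simp; try ring]
        exact Real.log_div (by linarith) hk0.ne'
      have key : Af ((k:ℝ)+1+s) - T k - l k
          = Real.log (Real.Gamma ((k:ℝ)+1+s))
            - (Real.log (Nat.factorial k) + s * Real.log (k:ℝ)) := by
        simp only [Af, hT, hldef, elog]
        ring
      linarith
    · filter_upwards [eventually_ge_atTop 1] with k hk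
      have hk0 : (0:ℝ) < k := by exact_mod_cast hk
      have hhi := logGamma_upper hk hs0 hs1
      have elog : Real.log (1+(1+s)/(k:ℝ)) = Real.log ((k:ℝ)+1+s) - Real.log k := by
        rw [show (1:ℝ)+(1+s)/(k:ℝ) = ((k:ℝ)+1+s)/k by field_simp; try ring]
        exact Real.log_div (by linarith) hk0.ne'
      have elog1 : Real.log (1+1/(k:ℝ)) = Real.log ((k:ℝ)+1) - Real.log k := by
        rw [show (1:ℝ)+1/(k:ℝ) = ((k:ℝ)+1)/k by field_simp; try ring]
        exact Real.log_div (by linarith) hk0.ne'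
      have key : u k - (Af ((k:ℝ)+1+s) - T k)
          = Real.log (Nat.factorial k) + s * Real.log ((k:ℝ)+1)
            - Real.log (Real.Gamma ((k:ℝ)+1+s)) := by
        simp only [Af, hT, hudef, hldef, elog, elog1]
        ring
      linarith
  have := hsq.add stirling_fact
  simp only [add_zero] at this
  apply this.congr
  intro k
  simp only [hT]
  ring

/-! ### The function F and its limit -/

noncomputable def Ff (y : ℝ) : ℝ :=
  Real.log (Real.Gamma y) - y * Real.log y + y - (1/2) * Real.log (2*Real.pi)
    + (1/2) * psi (y+1/3)

lemma B_tendsto {x : ℝ} (hx : 0 < x) :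
    Tendsto (fun n:ℕ => (1/2) * psi (x+n+1/3) - (1/2)*Real.log (x+n)) atTop (nhds 0) := by
  have hy : Tendsto (fun n:ℕ => x + (n:ℝ)) atTop atTop :=
    tendsto_atTop_add_const_left atTop x tendsto_natCast_atTop_atTop
  have hc : ∀ c : ℝ, Tendsto (fun n:ℕ => Real.log (1+c/(x+(n:ℝ)))) atTop (nhds 0) := by
    intro c
    have h1 : Tendsto (fun n:ℕ => c/(x+(n:ℝ))) atTop (nhds 0) := Tendsto.div_atTop tendsto_const_nhds hy
    have h2 : Tendsto (fun n:ℕ => 1+c/(x+(n:ℝ))) atTop (nhds 1) := by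
      simpa using tendsto_const_nhds.add h1
    have := ((Real.continuousAt_log one_ne_zero).tendsto).comp h2
    simpa [Function.comp_def] using this
  have hlo : Tendsto (fun n:ℕ => (1/2)*Real.log (1+(-2/3)/(x+(n:ℝ)))) atTop (nhds 0) := by
    simpa using (hc (-2/3)).const_mul (1/2 : ℝ)
  have hhi : Tendsto (fun n:ℕ => (1/2)*Real.log (1+(1/3)/(x+(n:ℝ)))) atTop (nhds 0) := by
    simpa using (hc (1/3)).const_mul (1/2 : ℝ)
  apply tendsto_of_tendsto_of_tendsto_of_le_of_le' hlo hhi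
  · filter_upwards [eventually_ge_atTop 1] with n hn
    have hn1 : (1:ℝ) ≤ (n:ℝ) := by exact_mod_cast hn
    have hxn : (1:ℝ) ≤ x + n := by linarith
    have hpos : (0:ℝ) < x + n := by linarith
    have h23 : (0:ℝ) < x + n - 2/3 := by linarith
    -- psi (x+n+1/3) ≥ log (x+n-2/3)
    have hp : Real.log (x+n-2/3) ≤ psi (x+n+1/3) := by
      have := log_le_psi_succ h23
      rw [show x+n-2/3+1 = x+n+1/3 by ring] at this
      exact this
    have elog : Real.log (1+(-2/3)/(x+(n:ℝ))) = Real.log (x+n-2/3) - Real.log (x+n) := by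
      rw [show (1:ℝ)+(-2/3)/(x+(n:ℝ)) = (x+n-2/3)/(x+n) by field_simp; try ring]
      exact Real.log_div h23.ne' hpos.ne'
    rw [elog]
    linarith
  · filter_upwards [eventually_ge_atTop 1] with n hn
    have hn1 : (1:ℝ) ≤ (n:ℝ) := by exact_mod_cast hn
    have hpos : (0:ℝ) < x + n := by linarith
    have h13 : (0:ℝ) < x + n + 1/3 := by linarith
    have hp : psi (x+n+1/3) ≤ Real.log (x+n+1/3) := psi_le_log h13
    have elog : Real.log (1+(1/3)/(x+(n:ℝ))) = Real.log (x+n+1/3) - Real.log (x+n) := by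
      rw [show (1:ℝ)+(1/3)/(x+(n:ℝ)) = (x+n+1/3)/(x+n) by field_simp; try ring]
      exact Real.log_div h13.ne' hpos.ne'
    rw [elog]
    linarith

lemma F_tendsto {x : ℝ} (hx : 0 < x) :
    Tendsto (fun n:ℕ => Ff (x + n)) atTop (nhds 0) := by
  set m : ℕ := Nat.floor x with hm
  set s : ℝ := x - m with hs
  have hs0 : 0 ≤ s := by
    have := Nat.floor_le hx.le
    simp only [hs]; linarith
  have hs1 : s < 1 := by
    have := Nat.lt_floor_add_one x
    simp only [hs]; linarith
  have hms : (m:ℝ) + s = x := by simp [hs]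
  have h1 : Tendsto (fun n:ℕ => Af (((n+m:ℕ):ℝ)+1+s)) atTop (nhds 0) :=
    (A_tendsto hs0 hs1).comp (tendsto_add_atTop_nat m)
  have h2 : Tendsto (fun n:ℕ => Af (x+((n:ℝ)+1))) atTop (nhds 0) := by
    apply h1.congr
    intro n
    congr 1
    push_cast
    linarith
  have h3 : Tendsto (fun n:ℕ => Af (x+(n:ℝ))) atTop (nhds 0) := by
    rw [← tendsto_add_atTop_iff_nat 1]
    apply h2.congr
    intro n
    congr 2
    push_cast
    ring
  have hB := B_tendsto hx
  have := h3.add hB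
  simp only [add_zero] at this
  apply this.congr
  intro n
  simp only [Af, Ff]
  ring

/-! ### The recursion -/

lemma F_sub {x : ℝ} (hx : 0 < x) :
    Ff x - Ff (x+1) = (x+1)*(Real.log (x+1) - Real.log x) - 1 - 1/(2*(x+1/3)) := by
  have h13 : (0:ℝ) < x+1/3 := by linarith
  have e1 : Real.Gamma (x+1) = x * Real.Gamma x := Real.Gamma_add_one hx.ne'
  have e2 : psi (x+1+1/3) = psi (x+1/3) + 1/(x+1/3) := by
    rw [show x+1+1/3 = x+1/3+1 by ring]
    exact psi_succ h13
  simp only [Ff]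
  rw [e1, Real.log_mul hx.ne' (Real.Gamma_pos_of_pos hx).ne', e2]
  have hne : (x+1/3) ≠ 0 := h13.ne'
  field_simp
  ring

lemma F_step {x : ℝ} (hx : 0 < x) : Ff (x+1) < Ff x := by
  have h1 := F_sub hx
  have h2 := g_pos hx
  linarith

lemma F_le {x : ℝ} (hx : 0 < x) (n : ℕ) : Ff (x + n) ≤ Ff x := by
  induction n with
  | zero => simp
  | succ n ih =>
    have hxn : (0:ℝ) < x + n := by positivity
    have := F_step hxn
    have e : x + ((n:ℝ)+1) = (x + n) + 1 := by ring
    push_cast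
    rw [e]
    linarith

lemma F_pos {x : ℝ} (hx : 0 < x) : 0 < Ff x := by
  have hx1 : (0:ℝ) < x + 1 := by linarith
  have h0 : 0 ≤ Ff (x+1) := le_of_tendsto' (F_tendsto hx1) (fun n => F_le hx1 n)
  have h1 := F_sub hx
  have h2 := g_pos hx
  linarith

end StmtAux

theorem stmt_0 (x : ℝ) (hx : 0 < x) :
    Real.exp (-(1/2) * psi (x + 1/3)) <
      Real.Gamma x / (x ^ x * Real.exp (-x) * Real.sqrt (2 * Real.pi)) := by
  have hF := StmtAux.F_pos hx
  have h2pi : (0:ℝ) < 2 * Real.pi := by positivity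
  have hxx : x ^ x = Real.exp (x * Real.log x) := by
    rw [Real.rpow_def_of_pos hx]; ring_nf
  have hsqrt : Real.sqrt (2*Real.pi) = Real.exp ((1/2) * Real.log (2*Real.pi)) := by
    rw [show (1:ℝ)/2 * Real.log (2*Real.pi) = Real.log (2*Real.pi) * (1/2) by ring,
      ← Real.rpow_def_of_pos h2pi, ← Real.sqrt_eq_rpow]
  have hG : Real.Gamma x = Real.exp (Real.log (Real.Gamma x)) :=
    (Real.exp_log (Real.Gamma_pos_of_pos hx)).symm
  rw [hxx, hsqrt]
  rw [hG, ← Real.exp_add, ← Real.exp_add, ← Real.exp_sub]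
  apply Real.exp_lt_exp.2
  have : StmtAux.Ff x = Real.log (Real.Gamma x) - x * Real.log x + x
      - (1/2) * Real.log (2*Real.pi) + (1/2) * psi (x+1/3) := rfl
  rw [this] at hF
  linarith
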